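/- Disaggregation of the p-norm cone: for p > 1, z > 0, and a nonnegative vector l ∈ R^m, the inequality z^p ≥ Σ_v l_v^p holds if and only if there exist nonnegative L_1, ..., L_m with z ≥ Σ_v L_v and L_v^{1/p} · z^{1−1/p} ≥ l_v for all v. -/
import Mathlib


theorem pnorm_cone_disaggregation (m : ℕ) (hm : 0 < m) (p : ℝ) (hp : 1 < p)
    (z : ℝ) (hz : 0 < z) (l : Fin m → ℝ) (hl : ∀ i, 0 ≤ l i) :
    (∑ v, (l v) ^ p ≤ z ^ p) ↔
    ∃ L : Fin m → ℝ, (∀ v, 0 ≤ L v) ∧ (∑ v, L v ≤ z) ∧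
      ∀ v, l v ≤ (L v) ^ (1 / p) * z ^ (1 - 1 / p) := by
  have hp0 : (0:ℝ) < p := lt_trans one_pos hp
  have hpne : p ≠ 0 := ne_of_gt hp0
  have hzp : (0:ℝ) < z ^ (p - 1) := Real.rpow_pos_of_pos hz _
  constructor
  · intro h
    refine ⟨fun v => l v ^ p / z ^ (p - 1), fun v => div_nonneg (Real.rpow_nonneg (hl v) _) hzp.le,
      ?_, ?_⟩
    · rw [← Finset.sum_div, div_le_iff₀ hzp]
      calc ∑ v, l v ^ p ≤ z ^ p := h
        _ = z * z ^ (p - 1) := by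
          rw [← Real.rpow_one_add' hz.le (by ring_nf; exact hpne)]
          ring_nf
    · intro v
      have : (l v ^ p / z ^ (p - 1)) ^ (1 / p) = l v / z ^ ((p-1) / p) := by
        rw [Real.div_rpow (Real.rpow_nonneg (hl v) _) hzp.le,
          ← Real.rpow_mul (hl v), ← Real.rpow_mul hz.le, mul_one_div, div_self hpne,
          Real.rpow_one, mul_one_div]
      rw [this]
      have h2 : (1 : ℝ) - 1 / p = (p - 1) / p := by field_simp
      rw [h2, div_mul_cancel₀]
      exact ne_of_gt (Real.rpow_pos_of_pos hz _)
  · rintro ⟨L, hL0, hLs, hLl⟩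
    have key : ∀ v, l v ^ p ≤ L v * z ^ (p - 1) := by
      intro v
      have := Real.rpow_le_rpow (hl v) (hLl v) hp0.le
      refine this.trans_eq ?_
      rw [Real.mul_rpow (Real.rpow_nonneg (hL0 v) _) (Real.rpow_nonneg hz.le _),
        ← Real.rpow_mul (hL0 v), ← Real.rpow_mul hz.le, one_div_mul_cancel hpne,
        Real.rpow_one]
      congr 1
      field_simp
    calc ∑ v, l v ^ p ≤ ∑ v, L v * z ^ (p - 1) := Finset.sum_le_sum fun v _ => key v
      _ = (∑ v, L v) * z ^ (p - 1) := by rw [Finset.sum_mul]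
      _ ≤ z * z ^ (p - 1) := by gcongr
      _ = z ^ p := by
        rw [← Real.rpow_one_add' hz.le (by ring_nf; exact hpne)]
        ring_nf
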